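/- Let A be a finite dimensional differential graded algebra over a field k with Jacobson radical J. Then J_+ := J + d(J) is a two-sided differential graded ideal of A. -/

import Mathlib

/-!
Write `σ` for the sign automorphism of `A`, acting by `(-1)^n` in degree `n`. The graded Leibniz
rule says that `d` is a `σ`-twisted derivation, `d (x * y) = d x * y + σ x * d y`, so
`x * d b = d (σ⁻¹ x * b) - d (σ⁻¹ x) * b` and `d b * x = d (b * x) - σ b * d x`. Both right-hand
sides lie in `J + d(J)` for `b ∈ J`, the second because the ring automorphism `σ` preserves the
Jacobson radical. Closure under `d` is `d² = 0`.
-/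

theorem TwoSidedIdeal.map_mem_jacobson_bot {R S : Type*} [Ring R] [Ring S] {f : R →+* S}
    (hf : Function.Surjective f) {x : R} (hx : x ∈ (⊥ : TwoSidedIdeal R).jacobson) :
    f x ∈ (⊥ : TwoSidedIdeal S).jacobson := by
  rw [TwoSidedIdeal.mem_jacobson_iff] at hx ⊢
  intro y
  obtain ⟨y, rfl⟩ := hf y
  obtain ⟨z, hz⟩ := hx y
  refine ⟨f z, ?_⟩
  rw [TwoSidedIdeal.mem_bot] at hz ⊢
  simpa only [map_sub, map_add, map_mul, map_one, map_zero] using congrArg f hz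

namespace TwoSidedIdeal

variable {A F : Type*} [Ring A] [FunLike F A A] [AddMonoidHomClass F A A]

def addTwistedDerivImage (J : TwoSidedIdeal A) (d : F) (σ : A ≃+* A)
    (hd : ∀ x y, d (x * y) = d x * y + σ x * d y) (hσJ : ∀ b ∈ J, σ b ∈ J) :
    TwoSidedIdeal A :=
  .mk' {x | ∃ a ∈ J, ∃ b ∈ J, x = a + d b}
    ⟨0, J.zero_mem, 0, J.zero_mem, by simp⟩
    (by
      rintro _ _ ⟨a, ha, b, hb, rfl⟩ ⟨a', ha', b', hb', rfl⟩
      exact ⟨a + a', J.add_mem ha ha', b + b', J.add_mem hb hb', by rw [map_add]; abel⟩)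
    (by
      rintro _ ⟨a, ha, b, hb, rfl⟩
      exact ⟨-a, J.neg_mem ha, -b, J.neg_mem hb, by rw [map_neg]; abel⟩)
    (by
      rintro x _ ⟨a, ha, b, hb, rfl⟩
      have hxd : x * d b = d (σ.symm x * b) - d (σ.symm x) * b := by
        rw [hd, RingEquiv.apply_symm_apply]; abel
      exact ⟨x * a - d (σ.symm x) * b, J.sub_mem (J.mul_mem_left _ _ ha) (J.mul_mem_left _ _ hb),
        σ.symm x * b, J.mul_mem_left _ _ hb, by rw [mul_add, hxd]; abel⟩)
    (by
      rintro _ x ⟨a, ha, b, hb, rfl⟩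
      have hdx : d b * x = d (b * x) - σ b * d x := by rw [hd]; abel
      exact ⟨a * x - σ b * d x, J.sub_mem (J.mul_mem_right _ _ ha)
        (J.mul_mem_right _ _ (hσJ b hb)), b * x, J.mul_mem_right _ _ hb,
        by rw [add_mul, hdx]; abel⟩)

variable {J : TwoSidedIdeal A} {d : F} {σ : A ≃+* A}
  {hd : ∀ x y, d (x * y) = d x * y + σ x * d y} {hσJ : ∀ b ∈ J, σ b ∈ J}

theorem coe_addTwistedDerivImage :
    (J.addTwistedDerivImage d σ hd hσJ : Set A) = {x | ∃ a ∈ J, ∃ b ∈ J, x = a + d b} :=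
  Set.ext (mem_mk' _ _ _ _ _ _)

theorem map_mem_addTwistedDerivImage (hd2 : ∀ a, d (d a) = 0) {x : A}
    (hx : x ∈ J.addTwistedDerivImage d σ hd hσJ) : d x ∈ J.addTwistedDerivImage d σ hd hσJ := by
  rw [← SetLike.mem_coe, coe_addTwistedDerivImage] at hx ⊢
  obtain ⟨a, ha, b, -, rfl⟩ := hx
  exact ⟨0, J.zero_mem, a, ha, by rw [map_add, hd2, add_zero, zero_add]⟩

end TwoSidedIdeal

namespace GradedAlgebra

variable {k A : Type*} [Field k] [Ring A] [Algebra k A] (𝒜 : ℤ → Submodule k A)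
  [GradedAlgebra 𝒜]

def signLinearMap : A →ₗ[k] A :=
  DirectSum.toModule k ℤ A (fun n => ((-1 : k) ^ n) • (𝒜 n).subtype) ∘ₗ
    (DirectSum.decomposeLinearEquiv 𝒜).toLinearMap

variable {𝒜}

theorem signLinearMap_of_mem {n : ℤ} {a : A} (ha : a ∈ 𝒜 n) :
    signLinearMap 𝒜 a = (-1 : k) ^ n • a := by
  rw [signLinearMap, LinearMap.comp_apply, LinearEquiv.coe_coe,
    DirectSum.decomposeLinearEquiv_apply, DirectSum.decompose_of_mem 𝒜 ha,
    ← DirectSum.lof_eq_of k, DirectSum.toModule_lof]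
  rfl

theorem signLinearMap_mul (a b : A) :
    signLinearMap 𝒜 (a * b) = signLinearMap 𝒜 a * signLinearMap 𝒜 b := by
  induction a using DirectSum.Decomposition.inductionOn 𝒜 with
  | zero => simp
  | add a a' ha ha' => rw [add_mul, map_add, ha, ha', map_add, add_mul]
  | @homogeneous m x =>
    induction b using DirectSum.Decomposition.inductionOn 𝒜 with
    | zero => simp
    | add b b' hb hb' => rw [mul_add, map_add, hb, hb', map_add, mul_add]
    | @homogeneous n y =>
      rw [signLinearMap_of_mem (SetLike.mul_mem_graded x.2 y.2), signLinearMap_of_mem x.2,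
        signLinearMap_of_mem y.2, smul_mul_smul_comm, zpow_add₀ (by norm_num)]

theorem signLinearMap_signLinearMap (a : A) : signLinearMap 𝒜 (signLinearMap 𝒜 a) = a := by
  induction a using DirectSum.Decomposition.inductionOn 𝒜 with
  | zero => simp
  | add a a' ha ha' => rw [map_add, map_add, ha, ha']
  | @homogeneous n x =>
    rw [signLinearMap_of_mem x.2, map_smul, signLinearMap_of_mem x.2, smul_smul,
      ← zpow_add₀ (by norm_num), Even.neg_one_zpow ⟨n, rfl⟩, one_smul]

variable (𝒜) in
def signAlgEquiv : A ≃ₐ[k] A :=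
  AlgEquiv.ofLinearEquiv
    (LinearEquiv.ofInvolutive (signLinearMap 𝒜) signLinearMap_signLinearMap)
    ((signLinearMap_of_mem (n := 0) (SetLike.GradedOne.one_mem (A := 𝒜))).trans (by simp))
    signLinearMap_mul

theorem signAlgEquiv_of_mem {n : ℤ} {a : A} (ha : a ∈ 𝒜 n) :
    signAlgEquiv 𝒜 a = (-1 : k) ^ n • a :=
  signLinearMap_of_mem ha

theorem map_mul_eq_add_signAlgEquiv_mul {d : A →ₗ[k] A}
    (hleib : ∀ n : ℤ, ∀ a ∈ 𝒜 n, ∀ b : A, d (a * b) = d a * b + ((-1 : k) ^ n) • (a * d b))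
    (x y : A) : d (x * y) = d x * y + signAlgEquiv 𝒜 x * d y := by
  induction x using DirectSum.Decomposition.inductionOn 𝒜 with
  | zero => simp
  | add x x' hx hx' => rw [add_mul, map_add, hx, hx', map_add, map_add, add_mul, add_mul]; abel
  | @homogeneous n x => rw [hleib n x x.2, signAlgEquiv_of_mem x.2, smul_mul_assoc]

end GradedAlgebra

theorem external_radical_is_dg_ideal_general
    {k A : Type*} [Field k] [Ring A] [Algebra k A]
    -- the grading of the finite dimensional DGA
    (𝒜 : ℤ → Submodule k A) [GradedAlgebra 𝒜]
    -- the differential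
    (d : A →ₗ[k] A)
    (hd2 : ∀ a : A, d (d a) = 0)
    (hleib : ∀ (n : ℤ), ∀ a ∈ 𝒜 n, ∀ b : A,
      d (a * b) = d a * b + ((-1 : k) ^ n) • (a * d b))
    -- the Jacobson radical of the underlying ungraded algebra
    (J : TwoSidedIdeal A) (hJ : J = (⊥ : TwoSidedIdeal A).jacobson)
    -- the external DG ideal J₊ = J + d(J)
    (Jp : Set A) (hJp : Jp = {x : A | ∃ a ∈ J, ∃ b ∈ J, x = a + d b}) :
    -- J₊ is a two-sided ideal closed under the differential
    (0 : A) ∈ Jp ∧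
    (∀ a ∈ Jp, ∀ b ∈ Jp, a + b ∈ Jp) ∧
    (∀ a ∈ Jp, -a ∈ Jp) ∧
    (∀ x : A, ∀ a ∈ Jp, x * a ∈ Jp) ∧
    (∀ x : A, ∀ a ∈ Jp, a * x ∈ Jp) ∧
    (∀ a ∈ Jp, d a ∈ Jp) := by
  let σ : A ≃+* A := GradedAlgebra.signAlgEquiv 𝒜
  have hσJ : ∀ b ∈ J, σ b ∈ J := by
    subst hJ
    exact fun b hb => TwoSidedIdeal.map_mem_jacobson_bot (f := σ.toRingHom) σ.surjective hb
  let I := J.addTwistedDerivImage d σ (GradedAlgebra.map_mul_eq_add_signAlgEquiv_mul hleib) hσJ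
  have hIJp : (I : Set A) = Jp := hJp ▸ TwoSidedIdeal.coe_addTwistedDerivImage
  subst hIJp
  exact ⟨I.zero_mem, fun _ ha _ hb => I.add_mem ha hb, fun _ ha => I.neg_mem ha,
    fun x _ ha => I.mul_mem_left x _ ha, fun x _ ha => I.mul_mem_right _ x ha,
    fun _ ha => TwoSidedIdeal.map_mem_addTwistedDerivImage hd2 ha⟩

theorem external_radical_is_dg_ideal
    {k A : Type*} [Field k] [Ring A] [Algebra k A] [FiniteDimensional k A]
    -- the grading of the finite dimensional DGA
    (𝒜 : ℤ → Submodule k A) [GradedAlgebra 𝒜]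
    -- the differential
    (d : A →ₗ[k] A)
    (hd2 : ∀ a : A, d (d a) = 0)
    (hdeg : ∀ (n : ℤ), ∀ a ∈ 𝒜 n, d a ∈ 𝒜 (n + 1))
    (hleib : ∀ (n : ℤ), ∀ a ∈ 𝒜 n, ∀ b : A,
      d (a * b) = d a * b + ((-1 : k) ^ n) • (a * d b))
    -- the Jacobson radical of the underlying ungraded algebra
    (J : TwoSidedIdeal A) (hJ : J = (⊥ : TwoSidedIdeal A).jacobson)
    -- the external DG ideal J₊ = J + d(J)
    (Jp : Set A) (hJp : Jp = {x : A | ∃ a ∈ J, ∃ b ∈ J, x = a + d b}) :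
    -- J₊ is a two-sided ideal closed under the differential
    (0 : A) ∈ Jp ∧
    (∀ a ∈ Jp, ∀ b ∈ Jp, a + b ∈ Jp) ∧
    (∀ a ∈ Jp, -a ∈ Jp) ∧
    (∀ x : A, ∀ a ∈ Jp, x * a ∈ Jp) ∧
    (∀ x : A, ∀ a ∈ Jp, a * x ∈ Jp) ∧
    (∀ a ∈ Jp, d a ∈ Jp) :=
  external_radical_is_dg_ideal_general 𝒜 d hd2 hleib J hJ Jp hJp
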